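/- In a deterministic regular tree grammar, the bottom-up parser fails on input tree x if and only if there is no nonterminal A ∈ Φ from which x can be generated; i.e., the parser succeeds on x if and only if x ∈ ⋃_{A ∈ Φ} L(G|A). -/

import Mathlib

structure Rule (N : Type) (α : Type) where
  lhs : N
  sym : α
  rhs : List N
deriving DecidableEq

inductive RTree (α : Type) where
  | node : α → List (RTree α) → RTree α

def RTree.size {α : Type} : RTree α → Nat
  | .node _ ys => 1 + (ys.attach.map (fun y => RTree.size y.1)).sum
decreasing_by have := List.sizeOf_lt_of_mem y.2; simp only [RTree.node.sizeOf_spec]; omega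

def RTree.children {α : Type} : RTree α → List (RTree α)
  | .node _ ys => ys

def RTree.root {α : Type} : RTree α → α
  | .node x _ => x

def RTree.dfs {α : Type} : RTree α → List (RTree α)
  | .node x ys => (ys.attach.map (fun y => RTree.dfs y.1)).flatten ++ [.node x ys]
decreasing_by have := List.sizeOf_lt_of_mem y.2; simp only [RTree.node.sizeOf_spec]; omega

inductive GenList {N α : Type} (R : Set (Rule N α)) :
    List (Rule N α) → List N → List (RTree α) → Prop where
  | nil : GenList R [] [] []
  | step {r : Rule N α} {rs : List (Rule N α)} {stack : List N}
      {ys ts : List (RTree α)} :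
      r ∈ R →
      ys.length = r.rhs.length →
      GenList R rs (r.rhs ++ stack) (ys ++ ts) →
      GenList R (r :: rs) (r.lhs :: stack) (RTree.node r.sym ys :: ts)

def GenSeq {N α : Type} (R : Set (Rule N α)) (rs : List (Rule N α))
    (A : N) (t : RTree α) : Prop :=
  GenList R rs [A] [t]

def Lang {N α : Type} (R : Set (Rule N α)) (A : N) : Set (RTree α) :=
  {t | ∃ rs, GenSeq R rs A t}

def LangN {N α : Type} (R : Set (Rule N α)) (A : N) (n : Nat) : Set (RTree α) :=
  {t ∈ Lang R A | t.size ≤ n}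

def Deterministic {N α : Type} (R : Set (Rule N α)) : Prop :=
  ∀ r ∈ R, ∀ r' ∈ R, r.sym = r'.sym → r.rhs = r'.rhs → r = r'

def parse {N α : Type} [DecidableEq N] [DecidableEq α] (R : List (Rule N α)) :
    RTree α → Option (N × List (Rule N α))
  | RTree.node x ys => do
    let res ← ys.attach.mapM (fun y => parse R y.1)
    match R.find? (fun r => r.sym == x && r.rhs == res.map Prod.fst) with
    | some r => some (r.lhs, r :: (res.map Prod.snd).flatten)
    | none => none
decreasing_by have := List.sizeOf_lt_of_mem y.2; simp only [RTree.node.sizeOf_spec]; omega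

/-!
A derivation from `A` of `x(y₁, …, y_k)` is exactly a rule `A → x(B₁, …, B_k)` together with
derivations of each `yᵢ` from `Bᵢ`. Soundness follows by induction on the tree: the rule found by
the parser glues the derivations of the children into one of the tree. For completeness, by
induction the parser returns `Bᵢ` on every `yᵢ`, so it finds some rule `A' → x(B₁, …, B_k)`, and
determinism forces it to be the rule with left-hand side `A`.
-/

theorem List.mapM_option_eq_some_iff {β γ : Type} {f : β → Option γ} {l : List β}
    {res : List γ} : l.mapM f = some res ↔ List.Forall₂ (fun b c => f b = some c) l res := by
  induction l generalizing res with
  | nil => simp [eq_comm]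
  | cons b l ih => cases res <;> simp [Option.bind_eq_some_iff, ih]

theorem List.Forall₂.imp_of_mem {β γ : Type} {p q : β → γ → Prop} {l₁ : List β} {l₂ : List γ}
    (h : List.Forall₂ p l₁ l₂) (H : ∀ a ∈ l₁, ∀ b, p a b → q a b) : List.Forall₂ q l₁ l₂ :=
  ((List.forall₂_and_left l₁ l₂).2 ⟨fun _ ha => ha, h⟩).imp fun a b ⟨ha, hab⟩ => H a ha b hab

theorem List.Forall₂.of_append {β γ : Type} {p : β → γ → Prop} {l₁ l₂ : List β}
    {m₁ m₂ : List γ} (h : List.Forall₂ p (l₁ ++ l₂) (m₁ ++ m₂)) (hlen : l₁.length = m₁.length) :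
    List.Forall₂ p l₁ m₁ ∧ List.Forall₂ p l₂ m₂ := by
  have htake := List.forall₂_take l₁.length h
  have hdrop := List.forall₂_drop l₁.length h
  simp only [List.take_left', List.drop_left', hlen] at htake hdrop
  exact ⟨htake, hdrop⟩

theorem List.Forall₂.exists_map_fst_eq {β γ δ : Type} {p : β → γ × δ → Prop} {l₁ : List β}
    {l₂ : List γ} (h : List.Forall₂ (fun a b => ∃ c, p a (b, c)) l₁ l₂) :
    ∃ l₃ : List (γ × δ), List.Forall₂ p l₁ l₃ ∧ l₃.map Prod.fst = l₂ := by
  induction h with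
  | nil => exact ⟨[], .nil, rfl⟩
  | @cons a b _ _ hab _ ih =>
    obtain ⟨c, hc⟩ := hab
    obtain ⟨l₃, hl₃, rfl⟩ := ih
    exact ⟨(b, c) :: l₃, .cons hc hl₃, rfl⟩

theorem List.find?_eq_some_of_unique {β : Type} {p : β → Bool} {l : List β} {a : β}
    (ha : a ∈ l) (hpa : p a) (huniq : ∀ b ∈ l, p b → b = a) : l.find? p = some a := by
  cases hfind : l.find? p with
  | none => exact absurd hpa (List.find?_eq_none.1 hfind a ha)
  | some b => rw [huniq b (List.mem_of_find?_eq_some hfind) (List.find?_some hfind)]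

section Grammar

variable {N α : Type} {R : Set (Rule N α)}

theorem GenList.append {rs₁ rs₂ : List (Rule N α)} {s₁ s₂ : List N}
    {ts₁ ts₂ : List (RTree α)} (h₁ : GenList R rs₁ s₁ ts₁) (h₂ : GenList R rs₂ s₂ ts₂) :
    GenList R (rs₁ ++ rs₂) (s₁ ++ s₂) (ts₁ ++ ts₂) := by
  induction h₁ with
  | nil => simpa using h₂
  | step hr hlen _ ih => simpa using GenList.step hr hlen (by simpa using ih)

theorem exists_genList_of_forall₂ {s : List N} {ts : List (RTree α)}
    (h : List.Forall₂ (fun A t => t ∈ Lang R A) s ts) : ∃ rs, GenList R rs s ts := by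
  induction h with
  | nil => exact ⟨[], .nil⟩
  | cons hhead _ ih =>
    obtain ⟨rs₁, h₁⟩ := hhead
    obtain ⟨rs₂, h₂⟩ := ih
    exact ⟨rs₁ ++ rs₂, h₁.append h₂⟩

theorem GenList.forall₂_mem_lang {rs : List (Rule N α)} {s : List N} {ts : List (RTree α)}
    (h : GenList R rs s ts) : List.Forall₂ (fun A t => t ∈ Lang R A) s ts := by
  induction h with
  | nil => exact .nil
  | step hr hlen _ ih =>
    obtain ⟨hchildren, hrest⟩ := ih.of_append hlen.symm
    obtain ⟨rs, hrs⟩ := exists_genList_of_forall₂ hchildren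
    exact .cons ⟨_, GenList.step hr hlen (by simpa using hrs)⟩ hrest

theorem node_mem_lang_iff {A : N} {x : α} {ys : List (RTree α)} :
    RTree.node x ys ∈ Lang R A ↔
      ∃ r ∈ R, r.lhs = A ∧ r.sym = x ∧ List.Forall₂ (fun B y => y ∈ Lang R B) r.rhs ys := by
  constructor
  · rintro ⟨_, h⟩
    cases h with
    | step hr _ h => exact ⟨_, hr, rfl, rfl, (by simpa using h : GenList R _ _ _).forall₂_mem_lang⟩
  · rintro ⟨r, hr, rfl, rfl, h⟩
    obtain ⟨rs, hrs⟩ := exists_genList_of_forall₂ h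
    exact ⟨r :: rs, GenList.step hr h.length_eq.symm (by simpa using hrs)⟩

end Grammar

section Parser

variable {N α : Type} [DecidableEq N] [DecidableEq α]

theorem parse_node_eq_some_iff (R : List (Rule N α)) {x : α} {ys : List (RTree α)}
    {p : N × List (Rule N α)} :
    parse R (.node x ys) = some p ↔ ∃ res, List.Forall₂ (fun y q => parse R y = some q) ys res ∧
      ∃ r, R.find? (fun r => r.sym == x && r.rhs == res.map Prod.fst) = some r ∧
        p = (r.lhs, r :: (res.map Prod.snd).flatten) := by
  rw [parse]
  simp only [bind, Option.bind_eq_some_iff, List.mapM_option_eq_some_iff]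
  refine exists_congr fun res => and_congr ?_ ?_
  · conv_rhs => rw [← List.attach_map_subtype_val ys, List.forall₂_map_left_iff]
  · cases R.find? _ <;> simp [eq_comm]

theorem mem_lang_of_parse_eq_some {R : List (Rule N α)} :
    ∀ {t : RTree α} {p : N × List (Rule N α)}, parse R t = some p → t ∈ Lang {r | r ∈ R} p.1
  | .node x ys, _, h => by
    obtain ⟨res, hres, r, hfind, rfl⟩ := (parse_node_eq_some_iff R).1 h
    obtain ⟨hsym, hrhs⟩ : r.sym = x ∧ r.rhs = res.map Prod.fst := by
      simpa using List.find?_some hfind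
    refine node_mem_lang_iff.2 ⟨r, List.mem_of_find?_eq_some hfind, rfl, hsym, ?_⟩
    rw [hrhs, List.forall₂_map_left_iff]
    exact (hres.imp_of_mem fun y hy q hq => mem_lang_of_parse_eq_some hq).flip
termination_by t => sizeOf t
decreasing_by have := List.sizeOf_lt_of_mem hy; simp only [RTree.node.sizeOf_spec]; omega

theorem exists_parse_eq_some_of_mem_lang {R : List (Rule N α)} (hdet : Deterministic {r | r ∈ R}) :
    ∀ {t : RTree α} {A : N}, t ∈ Lang {r | r ∈ R} A → ∃ rs, parse R t = some (A, rs)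
  | .node x ys, _, h => by
    obtain ⟨r, hr, rfl, rfl, hchildren⟩ := node_mem_lang_iff.1 h
    obtain ⟨res, hres, hfst⟩ := List.Forall₂.exists_map_fst_eq (p := fun y q => parse R y = some q)
      (hchildren.flip.imp_of_mem fun y hy B hB => exists_parse_eq_some_of_mem_lang hdet hB)
    have hfind : R.find? (fun r' => r'.sym == r.sym && r'.rhs == res.map Prod.fst) = some r :=
      List.find?_eq_some_of_unique hr (by simp [hfst]) fun r' hr' hmatch => by
        simp only [Bool.and_eq_true, beq_iff_eq, hfst] at hmatch
        exact hdet r' hr' r hr hmatch.1 hmatch.2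
    exact ⟨_, (parse_node_eq_some_iff R).2 ⟨res, hres, r, hfind, rfl⟩⟩
termination_by t => sizeOf t
decreasing_by have := List.sizeOf_lt_of_mem hy; simp only [RTree.node.sizeOf_spec]; omega

end Parser

theorem stmt14 {N alpha : Type} [DecidableEq N] [DecidableEq alpha]
    (R : List (Rule N alpha)) (hdet : Deterministic {r | r ∈ R})
    (t : RTree alpha) :
    (∃ res : N × List (Rule N alpha), parse R t = some res) ↔
      ∃ A : N, t ∈ Lang {r | r ∈ R} A := by
  constructor
  · rintro ⟨p, hp⟩
    exact ⟨p.1, mem_lang_of_parse_eq_some hp⟩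
  · rintro ⟨A, hA⟩
    obtain ⟨rs, hrs⟩ := exists_parse_eq_some_of_mem_lang hdet hA
    exact ⟨(A, rs), hrs⟩
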